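/- For fixed r ≥ 1 and n ≥ 0, substituting t = [rm+1]_q in the r-colored q-Stirling expansion gives: [rm+1]_q^n = Σ_{k=0}^{n} q^{r·binom(k+1,2) + (1-r)k} · [r]_q^k · [k]_{q^r}! · S_r[n,k] · qbinom(m,k)_{q^r} for all m ≥ 0. -/

import Mathlib

open Finset LaurentPolynomial

/-- `[m]_q = 1 + q + ... + q^{m-1}`. -/
def qnat {R : Type*} [CommRing R] (q : R) (m : ℕ) : R := ∑ i ∈ Finset.range m, q ^ i

/-- `[k]_q! = [1]_q [2]_q ⋯ [k]_q`. -/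
def qfact {R : Type*} [CommRing R] (q : R) (k : ℕ) : R := ∏ i ∈ Finset.range k, qnat q (i + 1)

/-- The Gaussian binomial coefficient, as a polynomial expression in `q`. -/
def qbin {R : Type*} [CommRing R] (q : R) : ℕ → ℕ → R
  | 0, 0 => 1
  | 0, _ + 1 => 0
  | _ + 1, 0 => 1
  | n + 1, k + 1 => qbin q n k + q ^ (k + 1) * qbin q n (k + 1)

/-- The r-colored q-Stirling numbers of the second kind, as Laurent polynomials in `q`:
`S_r[n,k] = S_r[n-1,k-1] + [rk+1]_q S_r[n-1,k]`, `S_r[0,k] = δ_{0k}`. -/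
noncomputable def qStirR (r : ℕ) : ℕ → ℕ → LaurentPolynomial ℤ
  | 0, 0 => 1
  | 0, _ + 1 => 0
  | n + 1, 0 => qnat (T 1) (r * 0 + 1) * qStirR r n 0
  | n + 1, k + 1 => qStirR r n k + qnat (T 1) (r * (k + 1) + 1) * qStirR r n (k + 1)

/-!
Write `Q = q^r`. Multiplication by `[rm+1]_q` acts on the basis
`b_k = q^{r·binom(k+1,2) + (1-r)k} [r]_q^k [k]_Q! · qbin(m,k)_Q` as
`[rm+1]_q · b_k = [rk+1]_q · b_k + b_{k+1}`: split `[rm+1]_q = [rk+1]_q + q^{rk+1} [r]_q [m-k]_Q`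
and absorb `[m-k]_Q` into the Gaussian binomial. This is the recurrence of `S_r[n,k]`, so
expanding `[rm+1]_q^n` in this basis produces the r-colored q-Stirling numbers.
-/

section QAnalogues

variable {R : Type*} [CommRing R] (q : R)

lemma qnat_zero : qnat q 0 = 0 := by simp [qnat]

lemma qnat_one : qnat q 1 = 1 := by simp [qnat]

lemma qnat_add (a b : ℕ) : qnat q (a + b) = qnat q a + q ^ a * qnat q b := by
  simp [qnat, Finset.sum_range_add, Finset.mul_sum, pow_add]

lemma qnat_mul (r j : ℕ) : qnat q (r * j) = qnat q r * qnat (q ^ r) j := by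
  induction j with
  | zero => simp [qnat_zero]
  | succ j ih =>
    rw [Nat.mul_succ, qnat_add, ih, qnat_add (q ^ r) j 1, qnat_one, pow_mul]
    ring

lemma qbin_zero_right : ∀ m : ℕ, qbin q m 0 = 1
  | 0 => rfl
  | _ + 1 => rfl

lemma qbin_succ_succ (m k : ℕ) :
    qbin q (m + 1) (k + 1) = qbin q m k + q ^ (k + 1) * qbin q m (k + 1) := rfl

lemma qbin_eq_zero_of_lt : ∀ {m k : ℕ}, m < k → qbin q m k = 0
  | 0, _ + 1, _ => rfl
  | m + 1, k + 1, h => by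
    rw [qbin_succ_succ, qbin_eq_zero_of_lt (by omega : m < k),
      qbin_eq_zero_of_lt (by omega : m < k + 1)]
    ring

lemma qbin_succ_right_mul_qnat :
    ∀ m k : ℕ, qbin q m (k + 1) * qnat q (k + 1) = qbin q m k * qnat q (m - k)
  | 0, k => by simp [qnat_zero, qbin_eq_zero_of_lt q (Nat.succ_pos k)]
  | m + 1, 0 => by
    have ih := qbin_succ_right_mul_qnat m 0
    rw [qbin_zero_right, qnat_one, mul_one, one_mul, Nat.sub_zero] at ih
    rw [qbin_succ_succ, qbin_zero_right, qbin_zero_right, ih, Nat.sub_zero, add_comm m 1,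
      qnat_add q 1 m, qnat_one]
    ring
  | m + 1, k + 1 => by
    have ih₁ := qbin_succ_right_mul_qnat m k
    have ih₂ := qbin_succ_right_mul_qnat m (k + 1)
    rw [qbin_succ_succ, qbin_succ_succ, Nat.add_sub_add_right]
    -- both sides are multiples of `qbin q m (k + 1)`, with coefficients that both equal `[m+1]_q`
    suffices qbin q m (k + 1) * (qnat q (k + 2) + q ^ (k + 2) * qnat q (m - (k + 1))) =
        qbin q m (k + 1) * (qnat q (k + 1) + q ^ (k + 1) * qnat q (m - k)) by
      linear_combination this + q ^ (k + 2) * ih₂ + ih₁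
    rcases lt_or_ge k m with hkm | hmk
    · rw [← qnat_add, ← qnat_add]
      congr 2
      omega
    · rw [qbin_eq_zero_of_lt q (by omega : m < k + 1), zero_mul, zero_mul]

lemma qnat_mul_qbin_pow (r m k : ℕ) :
    qnat q (r * m + 1) * qbin (q ^ r) m k =
      qnat q (r * k + 1) * qbin (q ^ r) m k +
        q ^ (r * k + 1) * qnat q r * (qbin (q ^ r) m (k + 1) * qnat (q ^ r) (k + 1)) := by
  rcases le_or_gt k m with hkm | hmk
  · have hsplit : r * m + 1 = (r * k + 1) + r * (m - k) := by
      rw [add_right_comm, ← Nat.mul_add, Nat.add_sub_cancel' hkm]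
    rw [qbin_succ_right_mul_qnat, hsplit, qnat_add, qnat_mul]
    ring
  · rw [qbin_eq_zero_of_lt _ hmk, qbin_eq_zero_of_lt _ (by omega : m < k + 1)]
    ring

end QAnalogues

lemma qStirR_eq_zero_of_lt (r : ℕ) : ∀ {n k : ℕ}, n < k → qStirR r n k = 0
  | 0, _ + 1, _ => rfl
  | n + 1, k + 1, h => by
    rw [qStirR, qStirR_eq_zero_of_lt r (by omega : n < k),
      qStirR_eq_zero_of_lt r (by omega : n < k + 1)]
    ring

lemma pow_eq_sum_qStirR_mul (r : ℕ) (x : LaurentPolynomial ℤ)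
    (b : ℕ → LaurentPolynomial ℤ) (hb₀ : b 0 = 1)
    (hb : ∀ k, x * b k = qnat (T 1) (r * k + 1) * b k + b (k + 1)) (n : ℕ) :
    x ^ n = ∑ k ∈ range (n + 1), qStirR r n k * b k := by
  induction n with
  | zero => simp [hb₀, qStirR]
  | succ n ih =>
    have hlast : qnat (T 1) (r * (n + 1) + 1) * qStirR r n (n + 1) * b (n + 1) = 0 := by
      rw [qStirR_eq_zero_of_lt r (Nat.lt_succ_self n), mul_zero, zero_mul]
    calc x ^ (n + 1)
        = ∑ k ∈ range (n + 1), qStirR r n k * (qnat (T 1) (r * k + 1) * b k + b (k + 1)) := by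
          simp only [pow_succ', ih, mul_sum, ← hb]
          exact sum_congr rfl fun k _ => mul_left_comm _ _ _
      _ = ∑ k ∈ range (n + 2), qnat (T 1) (r * k + 1) * qStirR r n k * b k +
            ∑ k ∈ range (n + 1), qStirR r n k * b (k + 1) := by
          rw [sum_range_succ _ (n + 1), hlast, add_zero, ← sum_add_distrib]
          exact sum_congr rfl fun k _ => by ring
      _ = ∑ k ∈ range (n + 2), qStirR r (n + 1) k * b k := by
          rw [sum_range_succ' _ (n + 1), sum_range_succ' (fun k => qStirR r (n + 1) k * b k)]
          simp only [qStirR, add_mul, sum_add_distrib]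
          ring

noncomputable def qStirCoeff (r k : ℕ) : LaurentPolynomial ℤ :=
  T ((r : ℤ) * (Nat.choose (k + 1) 2 : ℤ) + (1 - (r : ℤ)) * (k : ℤ)) *
    qnat (T 1 : LaurentPolynomial ℤ) r ^ k * qfact (T (r : ℤ) : LaurentPolynomial ℤ) k

lemma qStirCoeff_zero (r : ℕ) : qStirCoeff r 0 = 1 := by
  simp [qStirCoeff, qfact]

lemma qStirCoeff_succ (r k : ℕ) :
    qStirCoeff r (k + 1) =
      T ((r : ℤ) * k + 1) * qnat (T 1) r * qnat (T (r : ℤ)) (k + 1) * qStirCoeff r k := by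
  have hexp : (r : ℤ) * ((k + 2).choose 2 : ℕ) + (1 - r) * ((k + 1 : ℕ) : ℤ) =
      (r * k + 1) + ((r : ℤ) * ((k + 1).choose 2 : ℕ) + (1 - r) * k) := by
    rw [Nat.choose_succ_succ', Nat.choose_one_right]
    push_cast
    ring
  rw [qStirCoeff, qStirCoeff, hexp, T_add, qfact, prod_range_succ, ← qfact, pow_succ]
  ring

lemma T_one_pow (n : ℕ) : (T 1 : LaurentPolynomial ℤ) ^ n = T n := by
  rw [T_pow, mul_one]

lemma qnat_mul_qStirCoeff_mul_qbin (r m k : ℕ) :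
    qnat (T 1) (r * m + 1) * (qStirCoeff r k * qbin (T (r : ℤ)) m k) =
      qnat (T 1) (r * k + 1) * (qStirCoeff r k * qbin (T (r : ℤ)) m k) +
        qStirCoeff r (k + 1) * qbin (T (r : ℤ)) m (k + 1) := by
  have h := qnat_mul_qbin_pow (T 1 : LaurentPolynomial ℤ) r m k
  rw [T_one_pow, T_one_pow] at h
  rw [qStirCoeff_succ]
  push_cast at h
  linear_combination qStirCoeff r k * h

theorem stmt18_general (r n m : ℕ) :
    qnat (T 1 : LaurentPolynomial ℤ) (r * m + 1) ^ n =
      ∑ k ∈ Finset.range (n + 1),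
        T ((r : ℤ) * (Nat.choose (k + 1) 2 : ℤ) + (1 - (r : ℤ)) * (k : ℤ)) *
          qnat (T 1 : LaurentPolynomial ℤ) r ^ k * qfact (T (r : ℤ) : LaurentPolynomial ℤ) k *
          qStirR r n k * qbin (T (r : ℤ) : LaurentPolynomial ℤ) m k := by
  rw [pow_eq_sum_qStirR_mul r _ (fun k => qStirCoeff r k * qbin (T (r : ℤ)) m k)
    (by rw [qStirCoeff_zero, qbin_zero_right, one_mul]) (qnat_mul_qStirCoeff_mul_qbin r m) n]
  refine sum_congr rfl fun k _ => ?_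
  rw [qStirCoeff]
  ring

theorem stmt18 (r n m : ℕ) (hr : 1 ≤ r) :
    qnat (T 1 : LaurentPolynomial ℤ) (r * m + 1) ^ n =
      ∑ k ∈ Finset.range (n + 1),
        T ((r : ℤ) * (Nat.choose (k + 1) 2 : ℤ) + (1 - (r : ℤ)) * (k : ℤ)) *
          qnat (T 1 : LaurentPolynomial ℤ) r ^ k * qfact (T (r : ℤ) : LaurentPolynomial ℤ) k *
          qStirR r n k * qbin (T (r : ℤ) : LaurentPolynomial ℤ) m k :=
  stmt18_general r n m
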